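/- arXiv:2008.11030 — 3 statements merged into one kernel-verified Lean document; each statement's English description precedes it below -/
import Mathlib

section
/- Let p ≥ 1 be a real number and let a₁, a₂, b₁, b₂ be real numbers with a₁ ≤ a₂ and b₂ < b₁ (i.e., at the point x we have u₁(x) ≤ u₂(x) and at the point y we have u₁(y) > u₂(y)). Then |a₂ - b₁|^p + |a₁ - b₂|^p ≤ |a₁ - b₁|^p + |a₂ - b₂|^p. -/
/-!
The four differences pair up as `a₂ - b₁, a₁ - b₂` and `a₁ - b₁, a₂ - b₂` with equal sums, and the
hypotheses put `a₂ - b₁` between `a₁ - b₁` and `a₂ - b₂`. For a convex function, moving two points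
apart while keeping their sum fixed can only increase the sum of its values; apply this to `|t| ^ p`.
-/

open Set

theorem convexOn_norm_rpow {E : Type*} [SeminormedAddCommGroup E] [NormedSpace ℝ E] {p : ℝ}
    (hp : 1 ≤ p) : ConvexOn ℝ univ fun x : E => ‖x‖ ^ p := by
  refine ⟨convex_univ, fun x _ y _ a b ha hb hab => ?_⟩
  calc ‖a • x + b • y‖ ^ p ≤ (a * ‖x‖ + b * ‖y‖) ^ p := by
        refine Real.rpow_le_rpow (norm_nonneg _) ?_ (by linarith)
        simpa only [norm_smul, Real.norm_of_nonneg ha, Real.norm_of_nonneg hb]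
          using norm_add_le (a • x) (b • y)
    _ ≤ a • ‖x‖ ^ p + b • ‖y‖ ^ p :=
        (convexOn_rpow hp).2 (norm_nonneg x) (norm_nonneg y) ha hb hab

theorem ConvexOn.map_add_map_le_of_add_eq {𝕜 β : Type*} [Field 𝕜] [LinearOrder 𝕜]
    [IsStrictOrderedRing 𝕜] [AddCommGroup β] [PartialOrder β] [IsOrderedAddMonoid β]
    [Module 𝕜 β] {s : Set 𝕜} {f : 𝕜 → β} (hf : ConvexOn 𝕜 s f) {u v x y : 𝕜}
    (hu : u ∈ s) (hv : v ∈ s) (hx : x ∈ Icc u v) (hxy : x + y = u + v) :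
    f x + f y ≤ f u + f v := by
  rw [← segment_eq_Icc (hx.1.trans hx.2)] at hx
  obtain ⟨a, b, ha, hb, hab, rfl⟩ := hx
  have hy : y = b • u + a • v := by
    simp only [smul_eq_mul] at hxy ⊢
    linear_combination hxy - (u + v) * hab
  calc f (a • u + b • v) + f y ≤ (a • f u + b • f v) + (b • f u + a • f v) := by
        rw [hy]
        exact add_le_add (hf.2 hu hv ha hb hab) (hf.2 hu hv hb ha (by rwa [add_comm]))
    _ = f u + f v := by
        rw [add_add_add_comm, ← add_smul, add_comm (b • f v), ← add_smul, hab, one_smul,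
          one_smul]

theorem warma_pointwise_inequality (p a₁ a₂ b₁ b₂ : ℝ) (hp : 1 ≤ p)
    (ha : a₁ ≤ a₂) (hb : b₂ < b₁) :
    |a₂ - b₁| ^ p + |a₁ - b₂| ^ p ≤ |a₁ - b₁| ^ p + |a₂ - b₂| ^ p := by
  have hconvex : ConvexOn ℝ univ fun t : ℝ => |t| ^ p := by
    simpa only [Real.norm_eq_abs] using convexOn_norm_rpow (E := ℝ) hp
  exact hconvex.map_add_map_le_of_add_eq (mem_univ _) (mem_univ _)
    ⟨by linarith, by linarith⟩ (by ring)
end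

section
/- Let Ω ⊆ ℝⁿ be open, s ∈ (0,1), q : Ω → [1,∞) measurable with 1 < q⁻ ≤ q(x) ≤ q⁺ < ∞, and p : Ω×Ω → [1,∞) measurable with 1 < p⁻ ≤ p(x,y) ≤ p⁺ < ∞. For measurable u : Ω → ℝ define the modular ρ(u) = ∫_Ω |u(x)|^{q(x)} dx + ∫_Ω∫_Ω |u(x)-u(y)|^{p(x,y)} / |x-y|^{n+s·p(x,y)} dx dy. If u₁, u₂ have finite modular, then with u = max{u₁,u₂} and v = min{u₁,u₂}, one has ρ(u) + ρ(v) ≤ ρ(u₁) + ρ(u₂). -/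
open MeasureTheory Set Filter Topology ENNReal Bornology

noncomputable section

abbrev Eu (n : ℕ) := EuclideanSpace ℝ (Fin n)

/-- The `L^{q(·)}(Ω)` part of the fractional modular. -/
def qMod {n : ℕ} (Ω : Set (Eu n)) (q : Eu n → ℝ) (u : Eu n → ℝ) : ℝ≥0∞ :=
  ∫⁻ x in Ω, ENNReal.ofReal (|u x| ^ q x)

/-- The Gagliardo part of the fractional modular. -/
def gMod {n : ℕ} (Ω : Set (Eu n)) (s : ℝ) (p : Eu n → Eu n → ℝ)
    (u : Eu n → ℝ) : ℝ≥0∞ :=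
  ∫⁻ x in Ω, ∫⁻ y in Ω,
    ENNReal.ofReal (|u x - u y| ^ p x y / dist x y ^ ((n : ℝ) + s * p x y))

/-- The fractional variable exponent modular `ρ^{s,Ω}_{q(·),p(·,·)}`. -/
def rhoMod {n : ℕ} (Ω : Set (Eu n)) (s : ℝ) (q : Eu n → ℝ) (p : Eu n → Eu n → ℝ)
    (u : Eu n → ℝ) : ℝ≥0∞ :=
  qMod Ω q u + gMod Ω s p u

/-- The norm of `W^{s,q(·),p(·,·)}(Ω)`: Luxemburg norm of the `L^{q(·)}` part plus the
variable exponent Gagliardo seminorm. -/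
def sobNorm {n : ℕ} (Ω : Set (Eu n)) (s : ℝ) (q : Eu n → ℝ) (p : Eu n → Eu n → ℝ)
    (u : Eu n → ℝ) : ℝ :=
  sInf {l : ℝ | 0 < l ∧ qMod Ω q (fun x => u x / l) ≤ 1} +
  sInf {l : ℝ | 0 < l ∧ gMod Ω s p (fun x => u x / l) ≤ 1}

/-- Membership in the fractional Sobolev space `W^{s,q(·),p(·,·)}(Ω)`. -/
def memW {n : ℕ} (Ω : Set (Eu n)) (s : ℝ) (q : Eu n → ℝ) (p : Eu n → Eu n → ℝ)
    (u : Eu n → ℝ) : Prop :=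
  rhoMod Ω s q p u < ⊤

/-- `v ∈ C_c(closure Ω)` : continuous on `closure Ω` with compact support in `closure Ω`. -/
def CcBar {n : ℕ} (Ω : Set (Eu n)) (v : Eu n → ℝ) : Prop :=
  ContinuousOn v (closure Ω) ∧
    ∃ K, IsCompact K ∧ K ⊆ closure Ω ∧ ∀ x ∈ closure Ω, x ∉ K → v x = 0

/-- Membership in `𝒲̃^{s,q(·),p(·,·)}(Ω)`, the closure of
`W^{s,q(·),p(·,·)}(Ω) ∩ C_c(closure Ω)` in `W^{s,q(·),p(·,·)}(Ω)`. -/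
def memWt {n : ℕ} (Ω : Set (Eu n)) (s : ℝ) (q : Eu n → ℝ) (p : Eu n → Eu n → ℝ)
    (u : Eu n → ℝ) : Prop :=
  memW Ω s q p u ∧ ∀ ε > (0 : ℝ), ∃ v, memW Ω s q p v ∧ CcBar Ω v ∧
    sobNorm Ω s q p (fun x => u x - v x) < ε

/-- `O` is relatively open in `closure Ω`. -/
def relOpen {n : ℕ} (Ω O : Set (Eu n)) : Prop := ∃ U, IsOpen U ∧ O = U ∩ closure Ω

/-- The fractional relative `(s,q(·),p(·,·))`-capacity with respect to `Ω`. -/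
def capR {n : ℕ} (Ω : Set (Eu n)) (s : ℝ) (q : Eu n → ℝ) (p : Eu n → Eu n → ℝ)
    (E : Set (Eu n)) : ℝ≥0∞ :=
  ⨅ (O : Set (Eu n)) (_ : relOpen Ω O ∧ E ⊆ O) (u : Eu n → ℝ)
    (_ : memWt Ω s q p u ∧ ∀ᵐ x ∂(volume.restrict O), 1 ≤ u x),
    rhoMod Ω s q p u

/-- `v` is `(s,q(·),p(·,·))`-relatively quasicontinuous on `A`. -/
def quasiContOn {n : ℕ} (Ω : Set (Eu n)) (s : ℝ) (q : Eu n → ℝ) (p : Eu n → Eu n → ℝ)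
    (v : Eu n → ℝ) (A : Set (Eu n)) : Prop :=
  ∀ ε > (0 : ℝ), ∃ O, relOpen Ω O ∧ capR Ω s q p O < ENNReal.ofReal ε ∧
    ContinuousOn v (A \ O)

/-- Membership in `H₀^{s,q(·),p(·,·)}(Ω)`, the closure of `C₀^∞(Ω)` in
`W^{s,q(·),p(·,·)}(Ω)`. -/
def memH0 {n : ℕ} (Ω : Set (Eu n)) (s : ℝ) (q : Eu n → ℝ) (p : Eu n → Eu n → ℝ)
    (u : Eu n → ℝ) : Prop :=
  memW Ω s q p u ∧ ∀ ε > (0 : ℝ), ∃ v : Eu n → ℝ,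
    ContDiff ℝ (⊤ : ℕ∞) v ∧ HasCompactSupport v ∧ tsupport v ⊆ Ω ∧
    sobNorm Ω s q p (fun x => u x - v x) < ε

/-- Membership in `W₀^{s,q(·),p(·,·)}(Ω)`, the closure in `W^{s,q(·),p(·,·)}(Ω)` of the
set of Sobolev functions vanishing outside a compact subset of `Ω`. -/
def memW0 {n : ℕ} (Ω : Set (Eu n)) (s : ℝ) (q : Eu n → ℝ) (p : Eu n → Eu n → ℝ)
    (u : Eu n → ℝ) : Prop :=
  memW Ω s q p u ∧ ∀ ε > (0 : ℝ), ∃ v K, memW Ω s q p v ∧ IsCompact K ∧ K ⊆ Ω ∧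
    (∀ x ∉ K, v x = 0) ∧ sobNorm Ω s q p (fun x => u x - v x) < ε

/-- Membership in the zero-trace space `𝒲̃₀^{s,q(·),p(·,·)}(Ω)`: there is a relatively
quasicontinuous representative `ũ ∈ 𝒲̃^{s,q(·),p(·,·)}(Ω)` with `ũ = u` a.e. in `Ω`
and `ũ = 0` relatively quasi-everywhere outside `Ω`. -/
def memWt0 {n : ℕ} (Ω : Set (Eu n)) (s : ℝ) (q : Eu n → ℝ) (p : Eu n → Eu n → ℝ)
    (u : Eu n → ℝ) : Prop :=
  ∃ ut, memWt Ω s q p ut ∧ quasiContOn Ω s q p ut (closure Ω) ∧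
    (∀ᵐ x ∂(volume : Measure (Eu n)), x ∈ Ω → ut x = u x) ∧
    capR Ω s q p {x | x ∈ closure Ω \ Ω ∧ ut x ≠ 0} = 0



lemma convexAbsRpow {c : ℝ} (hc : 1 ≤ c) : ConvexOn ℝ Set.univ (fun x : ℝ => |x| ^ c) := by
  have habs : ConvexOn ℝ Set.univ (fun x : ℝ => |x|) := by
    exact (convexOn_univ_norm (E := ℝ))
  have himg : (fun x : ℝ => |x|) '' Set.univ = Set.Ici 0 := by
    ext y; simp only [Set.image_univ, Set.mem_range, Set.mem_Ici]
    constructor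
    · rintro ⟨x, rfl⟩; exact abs_nonneg x
    · intro hy; exact ⟨y, abs_of_nonneg hy⟩
  exact ConvexOn.comp (g := fun y : ℝ => y ^ c) (f := fun x : ℝ => |x|)
    (by rw [himg]; exact convexOn_rpow hc) habs
    (by rw [himg]; intro a ha b hb hab; exact Real.rpow_le_rpow ha hab (le_trans zero_le_one hc))

lemma keyIneq' {c m M a : ℝ} (hc : 1 ≤ c) (h1 : m ≤ a) (h2 : a ≤ M) :
    |a| ^ c + |m + M - a| ^ c ≤ |m| ^ c + |M| ^ c := by
  have hconv := convexAbsRpow hc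
  rcases eq_or_lt_of_le (h1.trans h2) with heq | hlt
  · have ham : a = m := le_antisymm (heq ▸ h2) h1
    have h3 : m + M - a = M := by rw [ham]; ring
    rw [h3, ham]
  · have hMm : 0 < M - m := by linarith
    set t := (a - m) / (M - m) with ht
    have ht0 : 0 ≤ t := div_nonneg (by linarith) hMm.le
    have ht1 : t ≤ 1 := (div_le_one hMm).2 (by linarith)
    have htm : t * (M - m) = a - m := div_mul_cancel₀ _ hMm.ne'
    have haeq : a = t * M + (1 - t) * m := by linear_combination -htm
    have hbeq : m + M - a = (1 - t) * M + t * m := by linear_combination htm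
    have h1' : |t * M + (1 - t) * m| ^ c ≤ t * |M| ^ c + (1 - t) * |m| ^ c := by
      have := hconv.2 (Set.mem_univ M) (Set.mem_univ m) ht0
        (by linarith : (0:ℝ) ≤ 1 - t) (by ring)
      simpa using this
    have h2' : |(1 - t) * M + t * m| ^ c ≤ (1 - t) * |M| ^ c + t * |m| ^ c := by
      have := hconv.2 (Set.mem_univ M) (Set.mem_univ m)
        (by linarith : (0:ℝ) ≤ 1 - t) ht0 (by ring)
      simpa using this
    rw [hbeq, haeq]
    calc |t * M + (1 - t) * m| ^ c + |(1 - t) * M + t * m| ^ c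
        ≤ (t * |M| ^ c + (1 - t) * |m| ^ c) + ((1 - t) * |M| ^ c + t * |m| ^ c) :=
          add_le_add h1' h2'
      _ = |m| ^ c + |M| ^ c := by ring

lemma keyIneq {c A B a : ℝ} (hc : 1 ≤ c) (h1 : min A B ≤ a) (h2 : a ≤ max A B) :
    |a| ^ c + |A + B - a| ^ c ≤ |A| ^ c + |B| ^ c := by
  have h := keyIneq' hc h1 h2
  rw [min_add_max] at h
  rcases le_total A B with hAB | hAB
  · rwa [min_eq_left hAB, max_eq_right hAB] at h
  · rw [min_eq_right hAB, max_eq_left hAB] at h; linarith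

lemma ptIneq {c D A B a b : ℝ} (hc : 1 ≤ c) (hD : 0 ≤ D) (hab : a + b = A + B)
    (hlb : min A B ≤ a) (hub : a ≤ max A B) :
    ENNReal.ofReal (|a| ^ c / D) + ENNReal.ofReal (|b| ^ c / D)
      ≤ ENNReal.ofReal (|A| ^ c / D) + ENNReal.ofReal (|B| ^ c / D) := by
  have hb : b = A + B - a := by linarith
  subst hb
  have hkey := keyIneq hc hlb hub
  rw [← ENNReal.ofReal_add (by positivity) (by positivity),
    ← ENNReal.ofReal_add (by positivity) (by positivity), ← add_div, ← add_div]
  apply ENNReal.ofReal_le_ofReal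
  rcases eq_or_lt_of_le hD with h0 | h0
  · rw [← h0]; simp
  · gcongr

theorem modular_submodular {n : ℕ} (Ω : Set (Eu n)) (s : ℝ) (q : Eu n → ℝ) (p : Eu n → Eu n → ℝ)
    (hΩ : IsOpen Ω) (hs : s ∈ Set.Ioo (0 : ℝ) 1)
    (hq : Measurable q) (hp : Measurable fun z : Eu n × Eu n => p z.1 z.2)
    (qm qp pm pp : ℝ) (hqm : 1 < qm) (hqb : ∀ x, qm ≤ q x ∧ q x ≤ qp)
    (hpm : 1 < pm) (hpb : ∀ x y, pm ≤ p x y ∧ p x y ≤ pp)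
    (u₁ u₂ : Eu n → ℝ) (hu₁ : Measurable u₁) (hu₂ : Measurable u₂)
    (hf₁ : rhoMod Ω s q p u₁ < ⊤) (hf₂ : rhoMod Ω s q p u₂ < ⊤) :
    rhoMod Ω s q p (fun x => max (u₁ x) (u₂ x)) +
      rhoMod Ω s q p (fun x => min (u₁ x) (u₂ x)) ≤
      rhoMod Ω s q p u₁ + rhoMod Ω s q p u₂ := by
  have hc1 : ∀ x y, 1 ≤ p x y := fun x y => hpm.le.trans (hpb x y).1
  have hmax : Measurable fun x => max (u₁ x) (u₂ x) := hu₁.max hu₂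
  have hmin : Measurable fun x => min (u₁ x) (u₂ x) := hu₁.min hu₂
  -- qMod part: exact equality
  have hqmeas : ∀ (u : Eu n → ℝ), Measurable u →
      Measurable fun x => ENNReal.ofReal (|u x| ^ q x) :=
    fun u hu => (hu.abs.pow hq).ennreal_ofReal
  have hqeq : qMod Ω q (fun x => max (u₁ x) (u₂ x)) + qMod Ω q (fun x => min (u₁ x) (u₂ x))
      = qMod Ω q u₁ + qMod Ω q u₂ := by
    unfold qMod
    rw [← lintegral_add_left (hqmeas _ hmax), ← lintegral_add_left (hqmeas _ hu₁)]
    apply lintegral_congr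
    intro x
    rcases le_total (u₁ x) (u₂ x) with h | h
    · simp [max_eq_right h, min_eq_left h, add_comm]
    · simp [max_eq_left h, min_eq_right h]
  -- gMod part: submodular inequality
  set G : (Eu n → ℝ) → Eu n × Eu n → ℝ≥0∞ := fun u z =>
    ENNReal.ofReal (|u z.1 - u z.2| ^ p z.1 z.2 / dist z.1 z.2 ^ ((n : ℝ) + s * p z.1 z.2))
    with hG
  have hGmeas : ∀ u : Eu n → ℝ, Measurable u → Measurable (G u) := by
    intro u hu
    exact ((((hu.comp measurable_fst).sub (hu.comp measurable_snd)).abs.pow hp).div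
      ((measurable_fst.dist measurable_snd).pow
        (measurable_const.add (measurable_const.mul hp)))).ennreal_ofReal
  have hrw : ∀ u : Eu n → ℝ, gMod Ω s p u = ∫⁻ x in Ω, ∫⁻ y in Ω, G u (x, y) := fun u => rfl
  have hadd : ∀ (u v : Eu n → ℝ), Measurable u → Measurable v →
      (∫⁻ x in Ω, ∫⁻ y in Ω, G u (x, y)) + (∫⁻ x in Ω, ∫⁻ y in Ω, G v (x, y))
        = ∫⁻ x in Ω, ∫⁻ y in Ω, (G u (x, y) + G v (x, y)) := by
    intro u v hu hv
    rw [← lintegral_add_left ((hGmeas u hu).lintegral_prod_right')]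
    exact lintegral_congr fun x =>
      (lintegral_add_left ((hGmeas u hu).comp measurable_prodMk_left) _).symm
  have hgle : gMod Ω s p (fun x => max (u₁ x) (u₂ x)) + gMod Ω s p (fun x => min (u₁ x) (u₂ x))
      ≤ gMod Ω s p u₁ + gMod Ω s p u₂ := by
    rw [hrw, hrw, hrw, hrw, hadd _ _ hmax hmin, hadd _ _ hu₁ hu₂]
    refine lintegral_mono fun x => lintegral_mono fun y => ?_
    simp only [hG]
    have h1 := min_add_max (u₁ x) (u₂ x)
    have h2 := min_add_max (u₁ y) (u₂ y)
    have hub : max (u₁ x) (u₂ x) - max (u₁ y) (u₂ y) ≤ max (u₁ x - u₁ y) (u₂ x - u₂ y) := by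
      rcases max_cases (u₁ x) (u₂ x) with ⟨he, _⟩ | ⟨he, _⟩
      · have := le_max_left (u₁ y) (u₂ y)
        have := le_max_left (u₁ x - u₁ y) (u₂ x - u₂ y)
        linarith
      · have := le_max_right (u₁ y) (u₂ y)
        have := le_max_right (u₁ x - u₁ y) (u₂ x - u₂ y)
        linarith
    have hlb : min (u₁ x - u₁ y) (u₂ x - u₂ y) ≤ max (u₁ x) (u₂ x) - max (u₁ y) (u₂ y) := by
      rcases max_cases (u₁ y) (u₂ y) with ⟨he, _⟩ | ⟨he, _⟩
      · have := le_max_left (u₁ x) (u₂ x)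
        have := min_le_left (u₁ x - u₁ y) (u₂ x - u₂ y)
        linarith
      · have := le_max_right (u₁ x) (u₂ x)
        have := min_le_right (u₁ x - u₁ y) (u₂ x - u₂ y)
        linarith
    exact ptIneq (hc1 x y) (Real.rpow_nonneg dist_nonneg _) (by linarith) hlb hub
  unfold rhoMod
  calc (qMod Ω q (fun x => max (u₁ x) (u₂ x)) + gMod Ω s p (fun x => max (u₁ x) (u₂ x)))
        + (qMod Ω q (fun x => min (u₁ x) (u₂ x)) + gMod Ω s p (fun x => min (u₁ x) (u₂ x)))
      = (qMod Ω q (fun x => max (u₁ x) (u₂ x)) + qMod Ω q (fun x => min (u₁ x) (u₂ x)))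
        + (gMod Ω s p (fun x => max (u₁ x) (u₂ x)) + gMod Ω s p (fun x => min (u₁ x) (u₂ x))) := by
        ring
    _ ≤ (qMod Ω q u₁ + qMod Ω q u₂) + (gMod Ω s p u₁ + gMod Ω s p u₂) := by
        rw [hqeq]; exact add_le_add le_rfl hgle
    _ = (qMod Ω q u₁ + gMod Ω s p u₁) + (qMod Ω q u₂ + gMod Ω s p u₂) := by ring


end
end

section
/- Let u ∈ W^{s,q(·),p(·,·)}(Ω) and for i ∈ ℕ set u_i := max{min(u, i), −i} (truncation at level i). Then u_i ∈ W^{s,q(·),p(·,·)}(Ω) and u_i → u in the W^{s,q(·),p(·,·)}(Ω)-norm as i → ∞. -/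
open MeasureTheory Set Filter Topology ENNReal Bornology

noncomputable section

namespace TruncAux

/-- Measurability of `x ↦ f x ^ g x` (real rpow) for nonnegative measurable base. -/
lemma measurable_rpow2 {α : Type*} [MeasurableSpace α] {f g : α → ℝ}
    (hf : Measurable f) (hg : Measurable g) (hf0 : ∀ x, 0 ≤ f x) :
    Measurable fun x => f x ^ g x := by
  have hEq : (fun x => f x ^ g x) =
      fun x => if f x = 0 then (if g x = 0 then 1 else 0)
        else Real.exp (Real.log (f x) * g x) := by
    funext x
    rcases eq_or_lt_of_le (hf0 x) with h | h
    · rw [if_pos h.symm, ← h]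
      rcases eq_or_ne (g x) 0 with hg0 | hg0
      · simp [hg0]
      · simp [Real.zero_rpow hg0, hg0]
    · rw [if_neg h.ne', Real.rpow_def_of_pos h]
  rw [hEq]
  exact Measurable.ite (hf (measurableSet_singleton 0))
    (Measurable.ite (hg (measurableSet_singleton 0)) measurable_const measurable_const)
    ((hf.log.mul hg).exp)

lemma lip (c a b : ℝ) :
    |max (min a c) (-c) - max (min b c) (-c)| ≤ |a - b| :=
  (abs_max_sub_max_le_abs _ _ _).trans <| by
    simpa using abs_min_sub_min_le_max a c b c

lemma eq_self {c a : ℝ} (h : |a| ≤ c) : max (min a c) (-c) = a := by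
  rw [min_eq_left (abs_le.1 h).2, max_eq_left (abs_le.1 h).1]

lemma abs_le' {c : ℝ} (hc : 0 ≤ c) (a : ℝ) : |max (min a c) (-c)| ≤ |a| := by
  have h := lip c a 0
  rw [min_eq_left hc, max_eq_left (neg_nonpos.2 hc)] at h
  simpa using h

lemma rpow_le_const {r e E : ℝ} (hr : 0 ≤ r) (he : 0 ≤ e) (heE : e ≤ E) :
    r ^ e ≤ max 1 (r ^ E) := by
  rcases le_total r 1 with h | h
  · exact le_trans (Real.rpow_le_one hr h he) (le_max_left _ _)
  · exact le_trans (Real.rpow_le_rpow_of_exponent_le h heE) (le_max_right _ _)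

/-- `sInf` of sets of positive reals tends to `0` if every positive level is
eventually a member. -/
lemma sInf_tendsto {S : ℕ → Set ℝ} (hpos : ∀ i, ∀ l ∈ S i, (0:ℝ) < l)
    (hev : ∀ l > (0:ℝ), ∀ᶠ i in atTop, l ∈ S i) :
    Tendsto (fun i => sInf (S i)) atTop (𝓝 0) := by
  rw [tendsto_order]
  constructor
  · intro a ha
    refine Eventually.of_forall fun i => lt_of_lt_of_le ha ?_
    exact Real.sInf_nonneg fun l hl => (hpos i l hl).le
  · intro a ha
    filter_upwards [hev (a / 2) (by linarith)] with i hi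
    have : sInf (S i) ≤ a / 2 :=
      csInf_le ⟨0, fun l hl => (hpos i l hl).le⟩ hi
    linarith

end TruncAux

set_option maxHeartbeats 1000000 in
theorem truncation_tendsto {n : ℕ} (Ω : Set (Eu n)) (s : ℝ) (q : Eu n → ℝ) (p : Eu n → Eu n → ℝ)
    (hΩ : IsOpen Ω) (hs : s ∈ Set.Ioo (0 : ℝ) 1)
    (hq : Measurable q) (hp : Measurable fun z : Eu n × Eu n => p z.1 z.2)
    (qm qp pm pp : ℝ) (hqm : 1 < qm) (hqb : ∀ x, qm ≤ q x ∧ q x ≤ qp)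
    (hpm : 1 < pm) (hpb : ∀ x y, pm ≤ p x y ∧ p x y ≤ pp)
    (u : Eu n → ℝ) (hu : Measurable u) (hfin : rhoMod Ω s q p u < ⊤) :
    (∀ i : ℕ, rhoMod Ω s q p (fun x => max (min (u x) (i : ℝ)) (-(i : ℝ))) < ⊤) ∧
      Tendsto (fun i : ℕ =>
          sobNorm Ω s q p (fun x => max (min (u x) (i : ℝ)) (-(i : ℝ)) - u x))
        atTop (𝓝 0) := by
  obtain ⟨hs0, hs1⟩ := hs
  set T : ℕ → Eu n → ℝ := fun i x => max (min (u x) (i : ℝ)) (-(i : ℝ)) with hT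
  have hq0 : ∀ x, 0 < q x := fun x => lt_of_lt_of_le (by linarith) (hqb x).1
  have hp0 : ∀ x y, 0 < p x y := fun x y => lt_of_lt_of_le (by linarith) (hpb x y).1
  have hmeasT : ∀ i, Measurable (T i) := fun i =>
    (hu.min measurable_const).max measurable_const
  have hqfin : qMod Ω q u ≠ ⊤ := (lt_of_le_of_lt le_self_add hfin).ne
  have hgfin : gMod Ω s p u ≠ ⊤ := (lt_of_le_of_lt le_add_self hfin).ne
  -- Part 1 : the truncations have finite modular
  have hqle : ∀ i, qMod Ω q (T i) ≤ qMod Ω q u := by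
    intro i
    refine lintegral_mono fun x => ENNReal.ofReal_le_ofReal ?_
    exact Real.rpow_le_rpow (abs_nonneg _)
      (TruncAux.abs_le' (Nat.cast_nonneg i) _) (hq0 x).le
  have hgle : ∀ i, gMod Ω s p (T i) ≤ gMod Ω s p u := by
    intro i
    refine lintegral_mono fun x => lintegral_mono fun y => ENNReal.ofReal_le_ofReal ?_
    have hnum : |T i x - T i y| ^ p x y ≤ |u x - u y| ^ p x y :=
      Real.rpow_le_rpow (abs_nonneg _) (TruncAux.lip _ _ _) (hp0 x y).le
    have hd : (0:ℝ) ≤ dist x y ^ ((n : ℝ) + s * p x y) := Real.rpow_nonneg dist_nonneg _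
    rcases hd.eq_or_lt with h | h
    · rw [← h]; simp
    · exact (div_le_div_iff_of_pos_right h).2 hnum
  have part1 : ∀ i, rhoMod Ω s q p (T i) < ⊤ := fun i =>
    lt_of_le_of_lt (add_le_add (hqle i) (hgle i)) hfin
  refine ⟨part1, ?_⟩
  -- key 1 : for each fixed `l > 0` the `q` modular of `(T i - u)/l` tends to `0`
  have key1 : ∀ l, 0 < l →
      Tendsto (fun i => qMod Ω q (fun x => (T i x - u x) / l)) atTop (𝓝 0) := by
    intro l hl
    set C : ℝ := max 1 ((2 / l) ^ qp) with hC
    have hC1 : (1:ℝ) ≤ C := le_max_left _ _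
    have hpt : ∀ (i : ℕ) x, |(T i x - u x) / l| ^ q x ≤ C * |u x| ^ q x := by
      intro i x
      have h1 : |(T i x - u x) / l| ≤ 2 / l * |u x| := by
        rw [abs_div, abs_of_pos hl, div_mul_eq_mul_div]
        refine (div_le_div_iff_of_pos_right hl).2 ?_
        calc |T i x - u x| ≤ |T i x| + |u x| := abs_sub _ _
          _ ≤ |u x| + |u x| := by
              have := TruncAux.abs_le' (Nat.cast_nonneg i) (u x); linarith
          _ = 2 * |u x| := by ring
      calc |(T i x - u x) / l| ^ q x ≤ (2 / l * |u x|) ^ q x :=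
            Real.rpow_le_rpow (abs_nonneg _) h1 (hq0 x).le
        _ = (2 / l) ^ q x * |u x| ^ q x := Real.mul_rpow (by positivity) (abs_nonneg _)
        _ ≤ C * |u x| ^ q x :=
            mul_le_mul_of_nonneg_right
              (TruncAux.rpow_le_const (by positivity) (hq0 x).le (hqb x).2)
              (Real.rpow_nonneg (abs_nonneg _) _)
    have hFm : ∀ i : ℕ, Measurable fun x => ENNReal.ofReal (|(T i x - u x) / l| ^ q x) :=
      fun i => (TruncAux.measurable_rpow2 (((hmeasT i).sub hu).div_const l).abs hq
        (fun x => abs_nonneg _)).ennreal_ofReal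
    have hBm : Measurable fun x => ENNReal.ofReal (|u x| ^ q x) :=
      (TruncAux.measurable_rpow2 hu.abs hq fun x => abs_nonneg _).ennreal_ofReal
    have hfin' : (∫⁻ x in Ω, ENNReal.ofReal C * ENNReal.ofReal (|u x| ^ q x)) ≠ ⊤ := by
      rw [lintegral_const_mul _ hBm]
      exact ENNReal.mul_ne_top ENNReal.ofReal_ne_top hqfin
    have hlim : ∀ x, Tendsto (fun i : ℕ => ENNReal.ofReal (|(T i x - u x) / l| ^ q x))
        atTop (𝓝 0) := by
      intro x
      have hev : ∀ᶠ i : ℕ in atTop, ENNReal.ofReal (|(T i x - u x) / l| ^ q x) = 0 := by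
        filter_upwards [eventually_ge_atTop ⌈|u x|⌉₊] with i hi
        have hTx : T i x = u x :=
          TruncAux.eq_self ((Nat.le_ceil _).trans (by exact_mod_cast hi))
        simp [hTx, Real.zero_rpow (hq0 x).ne']
      exact tendsto_const_nhds.congr' (hev.mono fun i h => h.symm)
    have hDC := tendsto_lintegral_of_dominated_convergence
      (μ := volume.restrict Ω) (f := fun _ : Eu n => (0 : ℝ≥0∞))
      (F := fun i x => ENNReal.ofReal (|(T i x - u x) / l| ^ q x))
      (fun x => ENNReal.ofReal C * ENNReal.ofReal (|u x| ^ q x)) hFm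
      (fun i => Eventually.of_forall fun x =>
        (ENNReal.ofReal_le_ofReal (hpt i x)).trans
          (ENNReal.ofReal_mul (by linarith : (0:ℝ) ≤ C)).le)
      hfin' (Eventually.of_forall hlim)
    simpa [qMod] using hDC
  -- key 2 : the same for the Gagliardo modular
  have key2 : ∀ l, 0 < l →
      Tendsto (fun i => gMod Ω s p (fun x => (T i x - u x) / l)) atTop (𝓝 0) := by
    intro l hl
    set ν := (volume.restrict Ω).prod (volume.restrict Ω) with hν
    have hGm : ∀ v : Eu n → ℝ, Measurable v → Measurable fun z : Eu n × Eu n =>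
        ENNReal.ofReal (|v z.1 - v z.2| ^ p z.1 z.2 /
          dist z.1 z.2 ^ ((n : ℝ) + s * p z.1 z.2)) := by
      intro v hv
      have h1 : Measurable fun z : Eu n × Eu n => |v z.1 - v z.2| ^ p z.1 z.2 :=
        TruncAux.measurable_rpow2
          ((hv.comp measurable_fst).sub (hv.comp measurable_snd)).abs hp
          fun z => abs_nonneg _
      have h2 : Measurable fun z : Eu n × Eu n =>
          dist z.1 z.2 ^ ((n : ℝ) + s * p z.1 z.2) :=
        TruncAux.measurable_rpow2 (measurable_fst.dist measurable_snd)
          (measurable_const.add (measurable_const.mul hp)) fun z => dist_nonneg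
      exact (h1.div h2).ennreal_ofReal
    have hrw : ∀ v : Eu n → ℝ, Measurable v → gMod Ω s p v =
        ∫⁻ z, ENNReal.ofReal (|v z.1 - v z.2| ^ p z.1 z.2 /
          dist z.1 z.2 ^ ((n : ℝ) + s * p z.1 z.2)) ∂ν :=
      fun v hv => (lintegral_prod _ (hGm v hv).aemeasurable).symm
    set C : ℝ := max 1 ((2 / l) ^ pp) with hC
    have hC1 : (1:ℝ) ≤ C := le_max_left _ _
    have hpt : ∀ (i : ℕ) (x y : Eu n),
        |(T i x - u x) / l - (T i y - u y) / l| ^ p x y /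
          dist x y ^ ((n : ℝ) + s * p x y)
        ≤ C * (|u x - u y| ^ p x y / dist x y ^ ((n : ℝ) + s * p x y)) := by
      intro i x y
      have h1 : |(T i x - u x) / l - (T i y - u y) / l| ≤ 2 / l * |u x - u y| := by
        rw [div_sub_div_same, abs_div, abs_of_pos hl, div_mul_eq_mul_div]
        refine (div_le_div_iff_of_pos_right hl).2 ?_
        have hre : T i x - u x - (T i y - u y) = T i x - T i y - (u x - u y) := by ring
        calc |T i x - u x - (T i y - u y)| = |T i x - T i y - (u x - u y)| := by rw [hre]
          _ ≤ |T i x - T i y| + |u x - u y| := abs_sub _ _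
          _ ≤ |u x - u y| + |u x - u y| := by
              have := TruncAux.lip (i : ℝ) (u x) (u y); linarith
          _ = 2 * |u x - u y| := by ring
      have hnum : |(T i x - u x) / l - (T i y - u y) / l| ^ p x y
          ≤ C * |u x - u y| ^ p x y := by
        calc |(T i x - u x) / l - (T i y - u y) / l| ^ p x y
            ≤ (2 / l * |u x - u y|) ^ p x y :=
              Real.rpow_le_rpow (abs_nonneg _) h1 (hp0 x y).le
          _ = (2 / l) ^ p x y * |u x - u y| ^ p x y :=
              Real.mul_rpow (by positivity) (abs_nonneg _)
          _ ≤ C * |u x - u y| ^ p x y :=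
              mul_le_mul_of_nonneg_right
                (TruncAux.rpow_le_const (by positivity) (hp0 x y).le (hpb x y).2)
                (Real.rpow_nonneg (abs_nonneg _) _)
      have hd : (0:ℝ) ≤ dist x y ^ ((n : ℝ) + s * p x y) := Real.rpow_nonneg dist_nonneg _
      rcases hd.eq_or_lt with h | h
      · rw [← h]; simp
      · calc |(T i x - u x) / l - (T i y - u y) / l| ^ p x y /
              dist x y ^ ((n : ℝ) + s * p x y)
            ≤ C * |u x - u y| ^ p x y / dist x y ^ ((n : ℝ) + s * p x y) :=
              (div_le_div_iff_of_pos_right h).2 hnum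
          _ = C * (|u x - u y| ^ p x y / dist x y ^ ((n : ℝ) + s * p x y)) :=
              mul_div_assoc _ _ _
    have hVm : ∀ i : ℕ, Measurable fun x => (T i x - u x) / l :=
      fun i => ((hmeasT i).sub hu).div_const l
    have hfin' : (∫⁻ z, ENNReal.ofReal C * ENNReal.ofReal (|u z.1 - u z.2| ^ p z.1 z.2 /
        dist z.1 z.2 ^ ((n : ℝ) + s * p z.1 z.2)) ∂ν) ≠ ⊤ := by
      rw [lintegral_const_mul _ (hGm u hu)]
      exact ENNReal.mul_ne_top ENNReal.ofReal_ne_top (by rw [← hrw u hu]; exact hgfin)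
    have hlim : ∀ z : Eu n × Eu n, Tendsto (fun i : ℕ =>
        ENNReal.ofReal (|(T i z.1 - u z.1) / l - (T i z.2 - u z.2) / l| ^ p z.1 z.2 /
          dist z.1 z.2 ^ ((n : ℝ) + s * p z.1 z.2))) atTop (𝓝 0) := by
      rintro ⟨x, y⟩
      have hev : ∀ᶠ i : ℕ in atTop,
          ENNReal.ofReal (|(T i x - u x) / l - (T i y - u y) / l| ^ p x y /
            dist x y ^ ((n : ℝ) + s * p x y)) = 0 := by
        filter_upwards [eventually_ge_atTop (max ⌈|u x|⌉₊ ⌈|u y|⌉₊)] with i hi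
        have hix : (⌈|u x|⌉₊ : ℝ) ≤ (i : ℝ) :=
          Nat.cast_le.2 (le_trans (le_max_left _ _) hi)
        have hiy : (⌈|u y|⌉₊ : ℝ) ≤ (i : ℝ) :=
          Nat.cast_le.2 (le_trans (le_max_right _ _) hi)
        have hTx : T i x = u x := TruncAux.eq_self ((Nat.le_ceil _).trans hix)
        have hTy : T i y = u y := TruncAux.eq_self ((Nat.le_ceil _).trans hiy)
        simp [hTx, hTy, Real.zero_rpow (hp0 x y).ne']
      exact tendsto_const_nhds.congr' (hev.mono fun i h => h.symm)
    have hDC := tendsto_lintegral_of_dominated_convergence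
      (μ := ν) (f := fun _ : Eu n × Eu n => (0 : ℝ≥0∞))
      (F := fun (i : ℕ) (z : Eu n × Eu n) =>
        ENNReal.ofReal (|(T i z.1 - u z.1) / l - (T i z.2 - u z.2) / l| ^ p z.1 z.2 /
          dist z.1 z.2 ^ ((n : ℝ) + s * p z.1 z.2)))
      (fun z => ENNReal.ofReal C * ENNReal.ofReal (|u z.1 - u z.2| ^ p z.1 z.2 /
        dist z.1 z.2 ^ ((n : ℝ) + s * p z.1 z.2)))
      (fun i => hGm (fun x => (T i x - u x) / l) (hVm i))
      (fun i => Eventually.of_forall fun z =>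
        (ENNReal.ofReal_le_ofReal (hpt i z.1 z.2)).trans
          (ENNReal.ofReal_mul (by linarith : (0:ℝ) ≤ C)).le)
      hfin' (Eventually.of_forall hlim)
    rw [lintegral_zero] at hDC
    refine Tendsto.congr (fun i => ?_) hDC
    exact (hrw (fun x => (T i x - u x) / l) (hVm i)).symm
  -- assemble
  have h1 : Tendsto (fun i => sInf {l : ℝ |
      0 < l ∧ qMod Ω q (fun x => (T i x - u x) / l) ≤ 1}) atTop (𝓝 0) := by
    refine TruncAux.sInf_tendsto (fun i l hl => hl.1) fun l hl => ?_
    filter_upwards [(key1 l hl).eventually_lt_const (by norm_num : (0:ℝ≥0∞) < 1)] with i hi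
    exact ⟨hl, hi.le⟩
  have h2 : Tendsto (fun i => sInf {l : ℝ |
      0 < l ∧ gMod Ω s p (fun x => (T i x - u x) / l) ≤ 1}) atTop (𝓝 0) := by
    refine TruncAux.sInf_tendsto (fun i l hl => hl.1) fun l hl => ?_
    filter_upwards [(key2 l hl).eventually_lt_const (by norm_num : (0:ℝ≥0∞) < 1)] with i hi
    exact ⟨hl, hi.le⟩
  have hsum := h1.add h2
  rw [add_zero] at hsum
  exact hsum

end
end
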